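/- arXiv:1109.2543 — 6 statements merged into one kernel-verified Lean document; each statement's English description precedes it below -/
import Mathlib

section
/- Let L ≥ 1 and K ≥ 2 be integers and let λ_c, λ_0, λ_1, …, λ_{K−1} ∈ ℝ^L. Set λ̄ = (1/K)·Σ_{j=0}^{K−1} λ_j. Then for every integer κ with 1 ≤ κ ≤ K, Σ_{S ⊆ {0,…,K−1}, |S| = κ} ‖λ_c − (1/κ)·Σ_{j∈S} λ_j‖² = C(K,κ)·[ ‖λ_c − λ̄‖² + ((K−κ)/(K·κ·(K−1)))·Σ_{i=0}^{K−1} ‖λ_i − λ̄‖² ], where C(K,κ) is the binomial coefficient and ‖·‖ is the Euclidean norm on ℝ^L. -/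
/-!
Centre everything at `λ̄`: with `a = λ_c - λ̄` and `μ i = λ_i - λ̄`, so that `∑ i, μ i = 0`, the
summand for `S` is `‖a - κ⁻¹ • ∑ j ∈ S, μ j‖²`. Every index lies in `C(K-1, κ-1)` of the subsets,
so the cross terms add up to a multiple of `⟪a, ∑ i, μ i⟫ = 0`. Since `∑ j ∈ S, μ j` is minus the
sum over the complement, `‖∑ j ∈ S, μ j‖² = -∑ i ∈ S, ∑ j ∉ S, ⟪μ i, μ j⟫`; every ordered pair
`i ≠ j` is separated by `C(K-2, κ-1)` subsets and `∑ j ≠ i, ⟪μ i, μ j⟫ = -‖μ i‖²`. The coefficient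
then comes from `K (K-1) C(K-2, κ-1) = κ (K-κ) C(K, κ)`.
-/

open Finset RealInnerProductSpace

namespace Finset

variable {α β M : Type*}

theorem sum_sum_eq_sum_card_filter_nsmul [Fintype β] [DecidableEq β] [AddCommMonoid M]
    (s : Finset α) (t : α → Finset β) (f : β → M) :
    ∑ x ∈ s, ∑ y ∈ t x, f y = ∑ y, #{x ∈ s | y ∈ t x} • f y := by
  rw [sum_comm' (t' := univ) (s' := fun y => {x ∈ s | y ∈ t x}) (by simp)]
  simp only [sum_const]

theorem filter_notMem_powersetCard [DecidableEq α] (s : Finset α) (a : α) (n : ℕ) :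
    {S ∈ s.powersetCard n | a ∉ S} = (s.erase a).powersetCard n := by
  ext S
  simp [mem_powersetCard, subset_erase, and_right_comm]

theorem card_filter_mem_powersetCard [DecidableEq α] {s : Finset α} {a : α} (ha : a ∈ s)
    (n : ℕ) : #{S ∈ s.powersetCard (n + 1) | a ∈ S} = (#s - 1).choose n := by
  simpa using card_filter_powersetCard_subset {a} s (n + 1) (by simpa) (by simp)

theorem sum_powersetCard_sum [Fintype α] [DecidableEq α] [AddCommMonoid M] (f : α → M)
    (n : ℕ) :
    ∑ S ∈ univ.powersetCard (n + 1), ∑ j ∈ S, f j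
      = (Fintype.card α - 1).choose n • ∑ j, f j := by
  rw [sum_sum_eq_sum_card_filter_nsmul, smul_sum]
  exact sum_congr rfl fun j _ => by rw [card_filter_mem_powersetCard (mem_univ j), card_univ]

theorem card_filter_mem_notMem_powersetCard [Fintype α] [DecidableEq α] {i j : α} (hij : i ≠ j)
    (n : ℕ) :
    #{S ∈ univ.powersetCard (n + 1) | i ∈ S ∧ j ∉ S} = (Fintype.card α - 2).choose n := by
  rw [← filter_filter, filter_comm, filter_notMem_powersetCard,
    card_filter_mem_powersetCard (mem_erase.2 ⟨hij, mem_univ i⟩),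
    card_erase_of_mem (mem_univ j), card_univ, Nat.sub_sub]

end Finset

theorem sub_smul_sum_eq_sub_smul_sum_sub {𝕜 ι E : Type*} [Field 𝕜] [CharZero 𝕜] [AddCommGroup E]
    [Module 𝕜 E] (c b : E) (x : ι → E) {S : Finset ι} (hS : S.Nonempty) :
    c - (1 / (#S : 𝕜)) • ∑ j ∈ S, x j = (c - b) - (1 / (#S : 𝕜)) • ∑ j ∈ S, (x j - b) := by
  have : (#S : 𝕜) ≠ 0 := by exact_mod_cast hS.card_ne_zero
  rw [sum_sub_distrib, sum_const, ← Nat.cast_smul_eq_nsmul 𝕜, smul_sub, smul_smul,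
    one_div_mul_cancel this, one_smul]
  abel

theorem sum_sub_smul_sum_eq_zero {𝕜 ι E : Type*} [Field 𝕜] [CharZero 𝕜] [AddCommGroup E]
    [Module 𝕜 E] (x : ι → E) {s : Finset ι} (hs : s.Nonempty) :
    ∑ i ∈ s, (x i - (1 / (#s : 𝕜)) • ∑ j ∈ s, x j) = 0 := by
  have : (#s : 𝕜) ≠ 0 := by exact_mod_cast hs.card_ne_zero
  rw [sum_sub_distrib, sum_const, ← Nat.cast_smul_eq_nsmul 𝕜, smul_smul,
    mul_one_div_cancel this, one_smul, sub_self]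

theorem Nat.cast_add_two_mul_add_one_mul_choose {R : Type*} [CommRing R] (m k : ℕ) :
    ((m + 2) * (m + 1) * m.choose k : R) = (m + 2).choose (k + 1) * (k + 1) * (m + 1 - k) := by
  rcases le_or_gt k (m + 1) with hk | hk
  · have h₁ := congrArg (Nat.cast (R := R)) (Nat.add_one_mul_choose_eq (m + 1) k)
    have h₂ := congrArg (Nat.cast (R := R)) (Nat.choose_mul_succ_eq m k)
    push_cast [Nat.cast_sub hk] at h₁ h₂
    linear_combination (m + 2 : R) * h₂ + (m + 1 - k : R) * h₁
  · rw [Nat.choose_eq_zero_of_lt (by omega), Nat.choose_eq_zero_of_lt (by omega)]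
    simp

section

variable {ι E : Type*} [Fintype ι] [DecidableEq ι] [NormedAddCommGroup E] [InnerProductSpace ℝ E]

theorem norm_sum_sq_eq_neg_sum_inner_compl {μ : ι → E} (hμ : ∑ i, μ i = 0) (S : Finset ι) :
    ‖∑ i ∈ S, μ i‖ ^ 2 = -∑ p ∈ S ×ˢ Sᶜ, ⟪μ p.1, μ p.2⟫ := by
  have hcompl : ∑ j ∈ Sᶜ, μ j = -∑ i ∈ S, μ i :=
    eq_neg_of_add_eq_zero_right ((sum_add_sum_compl S μ).trans hμ)
  have hself : ⟪∑ i ∈ S, μ i, ∑ i ∈ S, μ i⟫ = -⟪∑ i ∈ S, μ i, ∑ j ∈ Sᶜ, μ j⟫ := by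
    rw [hcompl, inner_neg_right, neg_neg]
  rw [← real_inner_self_eq_norm_sq, hself, sum_product, sum_inner]
  simp only [inner_sum]

theorem sum_powersetCard_norm_sum_sq {μ : ι → E} (hμ : ∑ i, μ i = 0) (n : ℕ) :
    ∑ S ∈ univ.powersetCard (n + 1), ‖∑ i ∈ S, μ i‖ ^ 2
      = (Fintype.card ι - 2).choose n * ∑ i, ‖μ i‖ ^ 2 := by
  set c := (Fintype.card ι - 2).choose n
  have hcount (i j : ι) : #{S ∈ univ.powersetCard (n + 1) | (i, j) ∈ S ×ˢ Sᶜ}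
      = if i = j then 0 else c := by
    split_ifs with hij
    · simp [hij]
    · simpa using card_filter_mem_notMem_powersetCard hij n
  have hrow (i : ι) : ∑ j ∈ univ.erase i, ⟪μ i, μ j⟫ = -‖μ i‖ ^ 2 := by
    rw [sum_erase_eq_sub (mem_univ i), ← inner_sum, hμ, inner_zero_right,
      real_inner_self_eq_norm_sq, zero_sub]
  calc ∑ S ∈ univ.powersetCard (n + 1), ‖∑ i ∈ S, μ i‖ ^ 2
      = -∑ i, ∑ j, #{S ∈ univ.powersetCard (n + 1) | (i, j) ∈ S ×ˢ Sᶜ} • ⟪μ i, μ j⟫ := by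
        simp only [norm_sum_sq_eq_neg_sum_inner_compl hμ, sum_neg_distrib,
          sum_sum_eq_sum_card_filter_nsmul, Fintype.sum_prod_type]
    _ = -∑ i, ∑ j ∈ univ.erase i, c * ⟪μ i, μ j⟫ := by
        congr 1
        refine sum_congr rfl fun i _ => ?_
        rw [← add_sum_erase _ _ (mem_univ i), hcount, if_pos rfl, zero_smul, zero_add]
        refine sum_congr rfl fun j hj => ?_
        rw [hcount, if_neg (ne_of_mem_erase hj).symm, nsmul_eq_mul]
    _ = c * ∑ i, ‖μ i‖ ^ 2 := by
        simp only [← mul_sum, hrow, sum_neg_distrib, mul_neg, neg_neg]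

theorem sum_powersetCard_norm_sub_smul_sum_sq (a : E) {μ : ι → E} (hμ : ∑ i, μ i = 0) (n : ℕ) :
    ∑ S ∈ univ.powersetCard (n + 1), ‖a - (1 / (n + 1 : ℝ)) • ∑ j ∈ S, μ j‖ ^ 2
      = (Fintype.card ι).choose (n + 1) * ‖a‖ ^ 2
        + (Fintype.card ι - 2).choose n / (n + 1) ^ 2 * ∑ i, ‖μ i‖ ^ 2 := by
  simp only [norm_sub_sq_real, inner_smul_right, norm_smul, mul_pow, sum_add_distrib,
    sum_sub_distrib, ← mul_sum, ← inner_sum, sum_powersetCard_sum, hμ, smul_zero,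
    inner_zero_right, sum_powersetCard_norm_sum_sq hμ, sum_const, card_powersetCard, card_univ]
  rw [nsmul_eq_mul, Real.norm_of_nonneg (by positivity)]
  field_simp
  ring

end

theorem mdc_cost_decomposition_general
    (L K : ℕ) (hK : 2 ≤ K)
    (lamc : EuclideanSpace ℝ (Fin L)) (lam : Fin K → EuclideanSpace ℝ (Fin L))
    (lbar : EuclideanSpace ℝ (Fin L))
    (hbar : lbar = (1 / (K : ℝ)) • ∑ j, lam j)
    (κ : ℕ) (hκ1 : 1 ≤ κ) :
    ∑ S ∈ Finset.univ.powersetCard κ,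
        ‖lamc - (1 / (κ : ℝ)) • ∑ j ∈ S, lam j‖ ^ 2
      = (K.choose κ : ℝ) *
        (‖lamc - lbar‖ ^ 2
          + ((K - κ : ℝ) / ((K : ℝ) * κ * (K - 1))) * ∑ i, ‖lam i - lbar‖ ^ 2) := by
  obtain ⟨m, rfl⟩ := Nat.exists_eq_add_of_le' hK
  obtain ⟨k, rfl⟩ := Nat.exists_eq_add_of_le' hκ1
  have hcentered : ∑ i, (lam i - lbar) = 0 := by
    simpa [hbar] using sum_sub_smul_sum_eq_zero (𝕜 := ℝ) lam (univ_nonempty (α := Fin (m + 2)))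
  have hshift : ∀ S ∈ univ.powersetCard (k + 1),
      ‖lamc - (1 / ((k + 1 : ℕ) : ℝ)) • ∑ j ∈ S, lam j‖ ^ 2
        = ‖(lamc - lbar) - (1 / ((k + 1 : ℕ) : ℝ)) • ∑ j ∈ S, (lam j - lbar)‖ ^ 2 := by
    intro S hS
    rw [← mem_powersetCard_univ.1 hS, sub_smul_sum_eq_sub_smul_sum_sub lamc lbar lam
      (card_pos.1 (by rw [mem_powersetCard_univ.1 hS]; omega))]
  rw [sum_congr rfl hshift]
  push_cast
  rw [sum_powersetCard_norm_sub_smul_sum_sq _ hcentered, Fintype.card_fin, Nat.add_sub_cancel,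
    show (m : ℝ) + 2 - 1 = m + 1 by ring]
  field_simp
  linear_combination
    (∑ i, ‖lam i - lbar‖ ^ 2) * Nat.cast_add_two_mul_add_one_mul_choose (R := ℝ) m k

/-- Decomposition of the total multiple-description labeling cost:
for `λ_c, λ_0, …, λ_{K-1} ∈ ℝ^L` with centroid `λ̄ = (1/K)·Σ_j λ_j` and any
`1 ≤ κ ≤ K`, the sum over all `κ`-element subsets `S` of `{0,…,K-1}` of
`‖λ_c − (1/κ)·Σ_{j∈S} λ_j‖²` equals
`C(K,κ)·(‖λ_c − λ̄‖² + ((K−κ)/(K·κ·(K−1)))·Σ_i ‖λ_i − λ̄‖²)`. -/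
theorem mdc_cost_decomposition
    (L K : ℕ) (hL : 1 ≤ L) (hK : 2 ≤ K)
    (lamc : EuclideanSpace ℝ (Fin L)) (lam : Fin K → EuclideanSpace ℝ (Fin L))
    (lbar : EuclideanSpace ℝ (Fin L))
    (hbar : lbar = (1 / (K : ℝ)) • ∑ j, lam j)
    (κ : ℕ) (hκ1 : 1 ≤ κ) (hκK : κ ≤ K) :
    ∑ S ∈ Finset.univ.powersetCard κ,
        ‖lamc - (1 / (κ : ℝ)) • ∑ j ∈ S, lam j‖ ^ 2
      = (K.choose κ : ℝ) *
        (‖lamc - lbar‖ ^ 2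
          + ((K - κ : ℝ) / ((K : ℝ) * κ * (K - 1))) * ∑ i, ‖lam i - lbar‖ ^ 2) :=
  mdc_cost_decomposition_general L K hK lamc lam lbar hbar κ hκ1
end

section
/- Fix an integer K ≥ 2 and a real ζ > 0, and let s ∈ ℝ^K have components s_j = (2j−K+1)/(2K). For X = (x_0,…,x_{K−1}) ∈ ℤ^K and z ∈ ℤ, define X̌ = (x̌_0,…,x̌_{K−1}) by x̌_j = x_{(z+j) mod K} − ⌊(z+j)/K⌋ for j = 0,…,K−1. Then: (i) Σ_{i=0}^{K−1} (Kζ·x_i + (2i−K+1)ζ/2 − ζ·z)² = K²ζ²·‖X̌ + s‖², and (ii) the centroid condition (1/K)·Σ_{i=0}^{K−1} (Kζ·x_i + (2i−K+1)ζ/2) = ζ·z holds if and only if Σ_{j=0}^{K−1} x̌_j = 0. -/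
open Fin.CommRing

/-! Writing `(z + j) mod K = z + j − K⌊(z + j)/K⌋`, the `i = (z + j) mod K` term of the cost
is `Kζ (x̌_j + s_j)`. As `j ↦ (z + j) mod K` is a bijection of `Fin K` (translation by `z`
in `ℤ/K`), summing the squares gives (i), and summing the terms themselves, using
`Σ_j s_j = 0`, gives `Σ_i (λ_i − ζz) = Kζ Σ_j x̌_j`, hence (ii). -/

open Finset

namespace Fin

variable {K : ℕ} [NeZero K]

theorem val_intCast_eq_sub_mul_ediv (a : ℤ) : (((a : Fin K) : ℕ) : ℤ) = a - K * (a / K) := by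
  rw [val_intCast, Int.toNat_of_nonneg (Int.emod_nonneg _ (by exact_mod_cast NeZero.ne K)),
    Int.emod_def]

theorem intCast_add_val (z : ℤ) (j : Fin K) : ((z + j : ℤ) : Fin K) = z + j := by
  push_cast
  simp

theorem sum_comp_intCast_add {M : Type*} [AddCommMonoid M] (z : ℤ) (f : Fin K → M) :
    ∑ j : Fin K, f ((z + j : ℤ) : Fin K) = ∑ i, f i := by
  simp_rw [intCast_add_val]
  exact Equiv.sum_comp (Equiv.addLeft _) f

end Fin

theorem sum_two_mul_val_sub_add_one (K : ℕ) : ∑ j : Fin K, (2 * (j : ℝ) - K + 1) = 0 := by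
  have gauss := congrArg (Nat.cast (R := ℝ)) (sum_range_id_mul_two K)
  rcases K with _ | n
  · simp
  simp only [sum_add_distrib, sum_sub_distrib, ← mul_sum,
    Fin.sum_univ_eq_sum_range (fun i => (i : ℝ))]
  push_cast at gauss
  simp only [Nat.cast_add, Nat.cast_one, sum_const, card_univ, Fintype.card_fin, nsmul_eq_mul,
    mul_one]
  linear_combination gauss

theorem quantizer_sub_reference_eq {K : ℕ} [NeZero K] (ζ : ℝ) (x z : ℤ) (j : Fin K) :
    (K : ℝ) * ζ * x + (2 * (((z + j : ℤ) : Fin K) : ℝ) - K + 1) * ζ / 2 - ζ * z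
      = K * ζ * (((x - (z + j) / K : ℤ) : ℝ) + (2 * (j : ℝ) - K + 1) / (2 * K)) := by
  have hK : (K : ℝ) ≠ 0 := Nat.cast_ne_zero.mpr (NeZero.ne K)
  have hval : (((z + j : ℤ) : Fin K) : ℝ) = z + j - K * (((z + j) / K : ℤ) : ℝ) := by
    exact_mod_cast Fin.val_intCast_eq_sub_mul_ediv (K := K) (z + j)
  rw [hval]
  push_cast
  field_simp
  ring

theorem ssd_cost_about_reference_point_general
    (K : ℕ) [NeZero K] (ζ : ℝ) (hζ : 0 < ζ)
    (s : EuclideanSpace ℝ (Fin K))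
    (hs : ∀ j : Fin K, s j = (2 * (j : ℝ) - K + 1) / (2 * K))
    (X : Fin K → ℤ) (z : ℤ)
    (Xc : Fin K → ℤ)
    (hXc : ∀ j : Fin K, Xc j = X (((z + (j : ℤ)) : ℤ) : Fin K) - (z + (j : ℤ)) / K)
    (XcR : EuclideanSpace ℝ (Fin K))
    (hXcR : ∀ j : Fin K, XcR j = (Xc j : ℝ)) :
    (∑ i : Fin K, ((K : ℝ) * ζ * (X i : ℝ) + (2 * (i : ℝ) - K + 1) * ζ / 2 - ζ * z) ^ 2
        = (K : ℝ) ^ 2 * ζ ^ 2 * ‖XcR + s‖ ^ 2) ∧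
    ((1 / (K : ℝ)) * ∑ i : Fin K,
          ((K : ℝ) * ζ * (X i : ℝ) + (2 * (i : ℝ) - K + 1) * ζ / 2) = ζ * z
        ↔ ∑ j : Fin K, Xc j = 0) := by
  set deviation : Fin K → ℝ :=
    fun i => (K : ℝ) * ζ * (X i : ℝ) + (2 * (i : ℝ) - K + 1) * ζ / 2 - ζ * z
  have hdeviation (j : Fin K) :
      deviation ((z + j : ℤ) : Fin K) = K * ζ * (XcR j + s j) := by
    rw [hXcR, hXc, hs]
    exact quantizer_sub_reference_eq ζ _ z j
  have hs_sum : ∑ j, s j = 0 := by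
    simp_rw [hs, ← sum_div, sum_two_mul_val_sub_add_one, zero_div]
  have hdeviation_sum : ∑ i, deviation i = K * ζ * ∑ j, Xc j := by
    rw [← Fin.sum_comp_intCast_add z, sum_congr rfl fun j _ => hdeviation j, ← mul_sum,
      sum_add_distrib, hs_sum, add_zero]
    simp [hXcR]
  constructor
  · change ∑ i, deviation i ^ 2 = _
    rw [← Fin.sum_comp_intCast_add z, EuclideanSpace.norm_sq_eq, mul_sum]
    refine sum_congr rfl fun j _ => ?_
    rw [hdeviation, Real.norm_eq_abs, sq_abs, PiLp.add_apply]
    ring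
  · have hcentroid : (1 / (K : ℝ)) * ∑ i : Fin K,
          ((K : ℝ) * ζ * (X i : ℝ) + (2 * (i : ℝ) - K + 1) * ζ / 2)
        = ζ * ∑ j, Xc j + ζ * z := by
      have hK : (K : ℝ) ≠ 0 := Nat.cast_ne_zero.mpr (NeZero.ne K)
      have hsum : ∑ i : Fin K, ((K : ℝ) * ζ * (X i : ℝ) + (2 * (i : ℝ) - K + 1) * ζ / 2)
          = K * ζ * ∑ j, Xc j + K * (ζ * z) := by
        refine eq_add_of_sub_eq ?_
        rw [← hdeviation_sum]
        simp [deviation, sum_sub_distrib]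
      rw [hsum]
      field_simp
    rw [hcentroid, add_eq_right, mul_eq_zero, or_iff_right hζ.ne', Int.cast_eq_zero]

/-- SSD cost about the reference point `ζ·z`: with
`x̌_j = x_{(z+j) mod K} − ⌊(z+j)/K⌋`, one has
`Σ_i (Kζ·x_i + (2i−K+1)ζ/2 − ζz)² = K²ζ²·‖X̌ + s‖²`, and the centroid condition
`(1/K)·Σ_i (Kζ·x_i + (2i−K+1)ζ/2) = ζ·z` holds iff `Σ_j x̌_j = 0`.
(Here the integer cast `((z + j : ℤ) : Fin K)` is reduction mod `K`, and `/` on `ℤ`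
is floor division since `K > 0`.) -/
theorem ssd_cost_about_reference_point
    (K : ℕ) (hK : 2 ≤ K) [NeZero K] (ζ : ℝ) (hζ : 0 < ζ)
    (s : EuclideanSpace ℝ (Fin K))
    (hs : ∀ j : Fin K, s j = (2 * (j : ℝ) - K + 1) / (2 * K))
    (X : Fin K → ℤ) (z : ℤ)
    (Xc : Fin K → ℤ)
    (hXc : ∀ j : Fin K, Xc j = X (((z + (j : ℤ)) : ℤ) : Fin K) - (z + (j : ℤ)) / K)
    (XcR : EuclideanSpace ℝ (Fin K))
    (hXcR : ∀ j : Fin K, XcR j = (Xc j : ℝ)) :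
    (∑ i : Fin K, ((K : ℝ) * ζ * (X i : ℝ) + (2 * (i : ℝ) - K + 1) * ζ / 2 - ζ * z) ^ 2
        = (K : ℝ) ^ 2 * ζ ^ 2 * ‖XcR + s‖ ^ 2) ∧
    ((1 / (K : ℝ)) * ∑ i : Fin K,
          ((K : ℝ) * ζ * (X i : ℝ) + (2 * (i : ℝ) - K + 1) * ζ / 2) = ζ * z
        ↔ ∑ j : Fin K, Xc j = 0) :=
  ssd_cost_about_reference_point_general K ζ hζ s hs X z Xc hXc XcR hXcR
end

section
/- Fix an integer K ≥ 2. Let A_{K−1} = {X ∈ ℤ^K : Σ_j x_j = 0}, let s ∈ ℝ^K have components s_j = (2j−K+1)/(2K), let [i] (0 ≤ i ≤ K−1) be the glue vectors, and let A*_{K−1} = ⋃_{i=0}^{K−1} ([i] + A_{K−1}) be the dual lattice. Then for every real r ≥ 0, the sets {y ∈ A*_{K−1} + s : ‖y‖² = r} and {y ∈ A_{K−1} + s : ‖y‖² = r} are finite, and the cardinality of the first equals K times the cardinality of the second. (Equivalently, the theta series satisfy Θ_{A_{K−1}+s}(z) = (1/K)·Θ_{A*_{K−1}+s}(z).) -/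
/-!
Adding the glue vector `[i]` to the deep hole `s` permutes its coordinates cyclically:
`[i] + s` is `s` with coordinates shifted by `i`. Since the shift is an isometry preserving
`A_{K−1}`, it maps `A_{K−1} + s` onto the coset `[i] + A_{K−1} + s`, so each of the `K`
shells `{y ∈ [i] + A_{K−1} + s : ‖y‖² = r}` is an isometric copy of the shell of
`A_{K−1} + s`. The cosets are disjoint (the fractional part of every coordinate of a point
of `[i] + A_{K−1}` is `i / K`), and shells of translates of `ℤ^K` are finite.
-/

open Set
open scoped Function

theorem image_sep_norm_of_norm_map {E F : Type*} [Norm E] [Norm F] {f : E → F}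
    (hf : ∀ x, ‖f x‖ = ‖x‖) (X : Set E) (p : ℝ → Prop) :
    f '' {y ∈ X | p ‖y‖} = {y ∈ f '' X | p ‖y‖} := by
  ext y
  constructor
  · rintro ⟨x, ⟨hx, hp⟩, rfl⟩
    exact ⟨mem_image_of_mem f hx, by rwa [hf]⟩
  · rintro ⟨⟨x, hx, rfl⟩, hp⟩
    exact ⟨x, ⟨hx, by rwa [hf] at hp⟩, rfl⟩

def zeroSumLattice (ι : Type*) [Fintype ι] : Set (EuclideanSpace ℝ ι) :=
  {v | ∃ Y : ι → ℤ, ∑ j, Y j = 0 ∧ ∀ j, v j = Y j}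

noncomputable def deepHole (n : ℕ) : EuclideanSpace ℝ (Fin n) :=
  WithLp.toLp 2 fun j => (2 * (j : ℝ) - n + 1) / (2 * n)

noncomputable def glueVector (n i : ℕ) : EuclideanSpace ℝ (Fin n) :=
  WithLp.toLp 2 fun j => if (j : ℕ) < n - i then (i : ℝ) / n else ((i : ℝ) - n) / n

noncomputable def dualLattice (n : ℕ) : Set (EuclideanSpace ℝ (Fin n)) :=
  {v | ∃ i : ℕ, i < n ∧ ∃ w ∈ zeroSumLattice (Fin n), v = glueVector n i + w}

section ZeroSumLattice

variable {ι : Type*} [Fintype ι]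

theorem piLpCongrLeft_mem_zeroSumLattice_iff (e : ι ≃ ι) {v : EuclideanSpace ℝ ι} :
    LinearIsometryEquiv.piLpCongrLeft 2 ℝ ℝ e v ∈ zeroSumLattice ι ↔ v ∈ zeroSumLattice ι := by
  constructor
  · rintro ⟨Y, hY, hv⟩
    refine ⟨Y ∘ e, by rw [← hY]; exact e.sum_comp Y, fun j => ?_⟩
    simpa using hv (e j)
  · rintro ⟨Y, hY, hv⟩
    refine ⟨Y ∘ e.symm, by rw [← hY]; exact e.symm.sum_comp Y, fun j => ?_⟩
    simp [Equiv.piCongrLeft'_apply, hv]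

theorem finite_setOf_norm_intCast_add_le (v : EuclideanSpace ℝ ι) (R : ℝ) :
    {Y : ι → ℤ | ‖WithLp.toLp 2 (fun j => (Y j : ℝ)) + v‖ ≤ R}.Finite := by
  refine (Metric.isCompact_of_isClosed_isBounded (isClosed_discrete _) ?_).finite_of_discrete
  refine (Metric.isBounded_iff_subset_closedBall 0).2 ⟨R + ‖v‖, fun Y (hY : _ ≤ R) => ?_⟩
  set y : EuclideanSpace ℝ ι := WithLp.toLp 2 (fun j => (Y j : ℝ))
  have hy : ‖y‖ ≤ R + ‖v‖ := by
    simpa using (norm_sub_le (y + v) v).trans (add_le_add_left hY _)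
  rw [mem_closedBall_zero_iff, pi_norm_le_iff_of_nonneg ((norm_nonneg y).trans hy)]
  intro j
  calc ‖Y j‖ = ‖y j‖ := by simp [y, Int.norm_eq_abs]
    _ ≤ R + ‖v‖ := (PiLp.norm_apply_le y j).trans hy

theorem finite_sep_zeroSumLattice_add_norm_sq_eq (v : EuclideanSpace ℝ ι) (r : ℝ) :
    {y ∈ {u | ∃ w ∈ zeroSumLattice ι, u = w + v} | ‖y‖ ^ 2 = r}.Finite := by
  refine ((finite_setOf_norm_intCast_add_le v √r).image
    fun Y => WithLp.toLp 2 (fun j => (Y j : ℝ)) + v).subset ?_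
  rintro _ ⟨⟨w, ⟨Y, -, hY⟩, rfl⟩, hr⟩
  have hw : w = WithLp.toLp 2 (fun j => (Y j : ℝ)) := by ext j; exact hY j
  subst hw
  exact ⟨Y, by rw [mem_ofPred_eq, ← hr, Real.sqrt_sq (norm_nonneg _)], rfl⟩

end ZeroSumLattice

section CyclicShift

variable {n : ℕ} [NeZero n]

noncomputable def cyclicShift (i : Fin n) :
    EuclideanSpace ℝ (Fin n) ≃ₗᵢ[ℝ] EuclideanSpace ℝ (Fin n) :=
  LinearIsometryEquiv.piLpCongrLeft 2 ℝ ℝ (Equiv.addRight i).symm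

@[simp]
theorem cyclicShift_apply (i : Fin n) (x : EuclideanSpace ℝ (Fin n)) (j : Fin n) :
    cyclicShift i x j = x (j + i) := by
  simp [cyclicShift, Equiv.piCongrLeft'_apply]

theorem cyclicShift_mem_zeroSumLattice_iff (i : Fin n) {v : EuclideanSpace ℝ (Fin n)} :
    cyclicShift i v ∈ zeroSumLattice (Fin n) ↔ v ∈ zeroSumLattice (Fin n) :=
  piLpCongrLeft_mem_zeroSumLattice_iff _

theorem glueVector_add_deepHole (i : Fin n) :
    glueVector n i + deepHole n = cyclicShift i (deepHole n) := by
  have hn : (0 : ℝ) < n := by exact_mod_cast Nat.pos_of_neZero n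
  ext j
  simp only [PiLp.add_apply, cyclicShift_apply, glueVector, deepHole, Fin.val_add]
  split_ifs with h
  · rw [Nat.mod_eq_of_lt (by omega)]
    push_cast
    field_simp
    ring
  · rw [Nat.mod_eq_sub_mod (by omega), Nat.mod_eq_of_lt (by omega), Nat.cast_sub (by omega)]
    push_cast
    field_simp
    ring

theorem fract_glueVector_add_apply (i j : Fin n) {w : EuclideanSpace ℝ (Fin n)}
    (hw : w ∈ zeroSumLattice (Fin n)) : Int.fract ((glueVector n i + w) j) = i / n := by
  have hn : (0 : ℝ) < n := by exact_mod_cast Nat.pos_of_neZero n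
  obtain ⟨Y, -, hY⟩ := hw
  have hi : (i : ℝ) / n < 1 := by rw [div_lt_one hn]; exact_mod_cast i.isLt
  simp only [PiLp.add_apply, glueVector, hY]
  split_ifs
  · rw [Int.fract_add_intCast, Int.fract_eq_self.2 ⟨by positivity, hi⟩]
  · have h : ((i : ℝ) - n) / n + Y j = i / n + ((Y j - 1 : ℤ) : ℝ) := by
      push_cast
      field_simp
      ring
    rw [h, Int.fract_add_intCast, Int.fract_eq_self.2 ⟨by positivity, hi⟩]

theorem image_cyclicShift_zeroSumLattice_add_deepHole (i : Fin n) :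
    cyclicShift i '' {v | ∃ w ∈ zeroSumLattice (Fin n), v = w + deepHole n} =
      {v | ∃ w ∈ zeroSumLattice (Fin n), v = glueVector n i + w + deepHole n} := by
  ext v
  constructor
  · rintro ⟨_, ⟨w, hw, rfl⟩, rfl⟩
    refine ⟨cyclicShift i w, (cyclicShift_mem_zeroSumLattice_iff i).2 hw, ?_⟩
    rw [map_add, ← glueVector_add_deepHole]
    abel
  · rintro ⟨w, hw, rfl⟩
    refine ⟨(cyclicShift i).symm w + deepHole n, ⟨_, ?_, rfl⟩, ?_⟩
    · rwa [← cyclicShift_mem_zeroSumLattice_iff i, LinearIsometryEquiv.apply_symm_apply]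
    · rw [map_add, LinearIsometryEquiv.apply_symm_apply, ← glueVector_add_deepHole]
      abel

theorem pairwise_disjoint_image_cyclicShift :
    Pairwise (Disjoint on fun i : Fin n =>
      cyclicShift i '' {v | ∃ w ∈ zeroSumLattice (Fin n), v = w + deepHole n}) := by
  intro i i' hne
  simp only [Function.onFun, image_cyclicShift_zeroSumLattice_add_deepHole, disjoint_left]
  rintro _ ⟨w, hw, rfl⟩ ⟨w', hw', hv⟩
  have hfract := congrArg (fun v => Int.fract ((v - deepHole n) i)) hv
  simp only [add_sub_cancel_right, fract_glueVector_add_apply _ _ hw,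
    fract_glueVector_add_apply _ _ hw'] at hfract
  have hn : (n : ℝ) ≠ 0 := by exact_mod_cast NeZero.ne n
  exact hne (Fin.ext (by exact_mod_cast (div_left_inj' hn).1 hfract))

theorem dualLattice_add_deepHole_eq_iUnion :
    {v | ∃ w ∈ dualLattice n, v = w + deepHole n} =
      ⋃ i : Fin n, cyclicShift i '' {v | ∃ w ∈ zeroSumLattice (Fin n), v = w + deepHole n} := by
  simp_rw [image_cyclicShift_zeroSumLattice_add_deepHole]
  ext v
  constructor
  · rintro ⟨_, ⟨i, hi, w, hw, rfl⟩, rfl⟩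
    exact mem_iUnion.2 ⟨⟨i, hi⟩, w, hw, rfl⟩
  · intro hv
    obtain ⟨i, w, hw, rfl⟩ := mem_iUnion.1 hv
    exact ⟨_, ⟨i, i.isLt, w, hw, rfl⟩, rfl⟩

end CyclicShift

/-- Shell-counting form of the theta-series identity
`Θ_{A_{K−1}+s}(z) = (1/K)·Θ_{A*_{K−1}+s}(z)`: for every `r ≥ 0`, the shells
`{y ∈ A*_{K−1}+s : ‖y‖² = r}` and `{y ∈ A_{K−1}+s : ‖y‖² = r}` are finite and
the former has exactly `K` times as many points as the latter. Here
`A*_{K−1} = ⋃_{i<K} ([i] + A_{K−1})` is the dual lattice and `[i]` the glue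
vectors. -/
theorem theta_series_shell_relation
    (K : ℕ) (hK : 2 ≤ K)
    (s : EuclideanSpace ℝ (Fin K))
    (hs : ∀ j : Fin K, s j = (2 * (j : ℝ) - K + 1) / (2 * K))
    (g : ℕ → EuclideanSpace ℝ (Fin K))
    (hg : ∀ i : ℕ, ∀ j : Fin K,
      g i j = if (j : ℕ) < K - i then (i : ℝ) / K else ((i : ℝ) - K) / K)
    (latt dual Aplus dualPlus : Set (EuclideanSpace ℝ (Fin K)))
    (hlatt : latt = {v | ∃ Y : Fin K → ℤ,
        (∑ j : Fin K, Y j) = 0 ∧ ∀ j : Fin K, v j = (Y j : ℝ)})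
    (hdual : dual = {v | ∃ i : ℕ, i < K ∧ ∃ w ∈ latt, v = g i + w})
    (hAplus : Aplus = {v | ∃ w ∈ latt, v = w + s})
    (hdualPlus : dualPlus = {v | ∃ w ∈ dual, v = w + s}) :
    ∀ r : ℝ, 0 ≤ r →
      {y ∈ dualPlus | ‖y‖ ^ 2 = r}.Finite ∧
      {y ∈ Aplus | ‖y‖ ^ 2 = r}.Finite ∧
      {y ∈ dualPlus | ‖y‖ ^ 2 = r}.ncard = K * {y ∈ Aplus | ‖y‖ ^ 2 = r}.ncard := by
  have : NeZero K := ⟨by omega⟩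
  obtain rfl : s = deepHole K := by ext j; simp [hs, deepHole]
  obtain rfl : g = fun i => glueVector K i := by funext i; ext j; simp [hg, glueVector]
  obtain rfl : latt = zeroSumLattice (Fin K) := hlatt
  obtain rfl : dual = dualLattice K := hdual
  subst hAplus hdualPlus
  intro r _
  set S := {y ∈ {v | ∃ w ∈ zeroSumLattice (Fin K), v = w + deepHole K} | ‖y‖ ^ 2 = r}
  have hS : S.Finite := finite_sep_zeroSumLattice_add_norm_sq_eq _ r
  have hdualShell : {y ∈ {v | ∃ w ∈ dualLattice K, v = w + deepHole K} | ‖y‖ ^ 2 = r} =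
      ⋃ i : Fin K, cyclicShift i '' S := by
    have hshift (i : Fin K) : cyclicShift i '' S =
        {y ∈ cyclicShift i '' {v | ∃ w ∈ zeroSumLattice (Fin K), v = w + deepHole K} |
          ‖y‖ ^ 2 = r} :=
      image_sep_norm_of_norm_map (cyclicShift i).norm_map _ (· ^ 2 = r)
    simp_rw [hshift, dualLattice_add_deepHole_eq_iUnion]
    ext y
    simp only [mem_iUnion, mem_ofPred_eq, exists_and_right]
  have hdisj : Pairwise (Disjoint on fun i : Fin K => cyclicShift i '' S) :=
    fun i i' hne => (pairwise_disjoint_image_cyclicShift hne).mono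
      (image_mono (sep_subset _ _)) (image_mono (sep_subset _ _))
  rw [hdualShell, ncard_iUnion_of_finite (fun i => hS.image _) hdisj, finsum_eq_sum_of_fintype]
  refine ⟨finite_iUnion fun i => hS.image _, hS, ?_⟩
  simp [ncard_image_of_injective _ (cyclicShift _).injective]
end

section
/- Fix a real ζ > 0 and a positive integer M, and let K = 2 and κ = 1. Let V_r(0) = {ζ·(2k − M + 1)/(2M) : k = 0,…,M−1}, and let μ_0 < μ_1 < ⋯ < μ_{M−1} be the M smallest SSD costs of centroid-0 pairs, i.e., μ_m = 2ζ²(m + 1/2)² for m = 0,…,M−1. Then the exact average cost of the optimal index assignment satisfies (1/M)·[ Σ_{λ ∈ V_r(0)} λ² + (1/2)·Σ_{m=0}^{M−1} μ_m ] = M²ζ²/3 − ζ²/(12M²). In particular, adding the central-quantizer term ζ²/(12M²) yields exactly M²ζ²/3. -/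
/-!
Both sums are quadratic in the summation index, so they reduce to the closed forms
`∑_{k<n} (2k+1)² = n(4n²-1)/3` and, after expanding `(2k+1-n)²` with `∑_{k<n} (2k+1) = n²`,
`∑_{k<n} (2k-n+1)² = n(n²-1)/3`. With `λ_k = ζ(2k-M+1)/(2M)` and `μ_m = ζ²(2m+1)²/2` the
bracket becomes `ζ²(M²-1)/(12M) + ζ²M(4M²-1)/12`, and dividing by `M` gives the claim.
-/

open Finset

lemma sum_range_two_mul_add_one (n : ℕ) : ∑ k ∈ range n, (2 * (k : ℝ) + 1) = (n : ℝ) ^ 2 := by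
  induction n with
  | zero => simp
  | succ n ih => rw [sum_range_succ, ih]; push_cast; ring

lemma sum_range_two_mul_add_one_sq (n : ℕ) :
    ∑ k ∈ range n, (2 * (k : ℝ) + 1) ^ 2 = (n : ℝ) * (4 * n ^ 2 - 1) / 3 := by
  induction n with
  | zero => simp
  | succ n ih => rw [sum_range_succ, ih]; push_cast; ring

lemma sum_range_two_mul_sub_add_one_sq (n : ℕ) :
    ∑ k ∈ range n, (2 * (k : ℝ) - n + 1) ^ 2 = (n : ℝ) * (n ^ 2 - 1) / 3 := by
  have expand : ∀ k : ℕ, (2 * (k : ℝ) - n + 1) ^ 2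
      = (2 * (k : ℝ) + 1) ^ 2 - 2 * n * (2 * (k : ℝ) + 1) + n ^ 2 := fun k => by ring
  rw [sum_congr rfl fun k _ => expand k, sum_add_distrib, sum_sub_distrib, ← mul_sum,
    sum_range_two_mul_add_one, sum_range_two_mul_add_one_sq, sum_const, card_range, nsmul_eq_mul]
  ring

lemma sum_sq_image_centered_grid {ζ : ℝ} (hζ : ζ ≠ 0) {M : ℕ} (hM : M ≠ 0) :
    ∑ v ∈ (range M).image (fun k : ℕ => ζ * (2 * (k : ℝ) - M + 1) / (2 * M)), v ^ 2
      = ζ ^ 2 * ((M : ℝ) ^ 2 - 1) / (12 * M) := by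
  have hM' : (M : ℝ) ≠ 0 := Nat.cast_ne_zero.mpr hM
  have inj : Set.InjOn (fun k : ℕ => ζ * (2 * (k : ℝ) - M + 1) / (2 * M)) (range M) := by
    intro x _ y _ h
    field_simp at h
    exact_mod_cast (by linarith : (x : ℝ) = y)
  have rescale : ∀ k : ℕ, (ζ * (2 * (k : ℝ) - M + 1) / (2 * M)) ^ 2
      = (ζ / (2 * M)) ^ 2 * (2 * (k : ℝ) - M + 1) ^ 2 := fun k => by ring
  rw [sum_image inj]
  simp only [rescale, ← mul_sum, sum_range_two_mul_sub_add_one_sq]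
  field_simp
  ring

/-- Exact average cost of the optimal two-description index assignment
(`K = 2`, `κ = 1`): with `V_r(0) = {ζ(2k − M + 1)/(2M) : k < M}` and the `M`
smallest SSD costs `μ_m = 2ζ²(m + 1/2)²`, one has
`(1/M)·(Σ_{λ∈V_r(0)} λ² + (1/2)·Σ_{m<M} μ_m) = M²ζ²/3 − ζ²/(12M²)`; adding the
central-quantizer term `ζ²/(12M²)` yields exactly `M²ζ²/3`. -/
theorem two_description_exact_average_cost
    (ζ : ℝ) (hζ : 0 < ζ) (M : ℕ) (hM : 0 < M)
    (Vr0 : Finset ℝ)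
    (hVr0 : Vr0 = (Finset.range M).image
        (fun k : ℕ => ζ * (2 * (k : ℝ) - M + 1) / (2 * M)))
    (μ : ℕ → ℝ) (hμ : ∀ m : ℕ, μ m = 2 * ζ ^ 2 * ((m : ℝ) + 1 / 2) ^ 2) :
    (1 / (M : ℝ)) * ((∑ v ∈ Vr0, v ^ 2) + (1 / 2) * ∑ m ∈ Finset.range M, μ m)
        = (M : ℝ) ^ 2 * ζ ^ 2 / 3 - ζ ^ 2 / (12 * (M : ℝ) ^ 2) ∧
    (1 / (M : ℝ)) * ((∑ v ∈ Vr0, v ^ 2) + (1 / 2) * ∑ m ∈ Finset.range M, μ m)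
        + ζ ^ 2 / (12 * (M : ℝ) ^ 2) = (M : ℝ) ^ 2 * ζ ^ 2 / 3 := by
  have hM' : (M : ℝ) ≠ 0 := by positivity
  have sum_Vr0 : ∑ v ∈ Vr0, v ^ 2 = ζ ^ 2 * ((M : ℝ) ^ 2 - 1) / (12 * M) := by
    rw [hVr0, sum_sq_image_centered_grid hζ.ne' hM.ne']
  have sum_μ : ∑ m ∈ range M, μ m = ζ ^ 2 / 2 * (M * (4 * (M : ℝ) ^ 2 - 1) / 3) := by
    rw [← sum_range_two_mul_add_one_sq, mul_sum]
    exact sum_congr rfl fun m _ => by rw [hμ]; ring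
  rw [sum_Vr0, sum_μ]
  constructor <;> field_simp <;> ring
end

section
/- For a positive integer M, let P(M) = {0} ∪ {i(M−1) : i = 1,…,M−1} ∪ {(M−1)² + M} ∪ {(M−1)² + M + i(M+1) : i = 1,…,M−1} ⊂ ℤ. Then: (i) P(M) has exactly 2M elements; (ii) min P(M) = 0 and max P(M) = M(2M−1), so the spread max P(M) − min P(M) equals b(b−1)/2 with b = 2M, i.e., P(M) achieves the lower bound b(b−1)/2 on the spread of a quantization unit of bandwidth b; (iii) when the elements of P(M) are listed in increasing order, the consecutive differences are M−1 repeated M−1 times, then M once, then M+1 repeated M−1 times. -/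
/-!
Indexing `P(M)` increasingly by `j < 2M` gives the closed form `p j = j(M-1)` for `j < M` and
`p j = (M-1)² + M + (j-M)(M+1)` otherwise. Its consecutive differences are the claimed ones, all
positive, so `p` is strictly monotone: it enumerates `P(M)` without repetition and in sorted
order, from `p 0 = 0` to `p (2M-1) = M(2M-1)`.
-/

theorem StrictMono.sort_image_range {α : Type*} [LinearOrder α] {f : ℕ → α} (hf : StrictMono f)
    (n : ℕ) : ((Finset.range n).image f).sort (· ≤ ·) = (List.range n).map f := by
  have := (hf.strictMonoOn (Finset.range n : Set ℕ)).map_finsetSort (f := ⟨f, hf.injective⟩)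
  rw [Finset.sort_range, Finset.map_eq_image] at this
  exact this.symm

def patternElem (M j : ℕ) : ℤ :=
  if j < M then j * ((M : ℤ) - 1) else ((M : ℤ) - 1) ^ 2 + M + ((j : ℤ) - M) * ((M : ℤ) + 1)

section

variable {M : ℕ}

theorem patternElem_of_lt {j : ℕ} (hj : j < M) : patternElem M j = j * ((M : ℤ) - 1) :=
  if_pos hj

theorem patternElem_add (i : ℕ) :
    patternElem M (M + i) = ((M : ℤ) - 1) ^ 2 + M + i * ((M : ℤ) + 1) := by
  simp [patternElem]

theorem patternElem_zero (hM : 0 < M) : patternElem M 0 = 0 := by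
  simp [patternElem, hM]

theorem patternElem_last (hM : 0 < M) : patternElem M (2 * M - 1) = M * (2 * (M : ℤ) - 1) := by
  rw [patternElem, if_neg (by omega), Nat.cast_sub (by omega)]
  push_cast
  ring

theorem patternElem_succ_sub (hM : 0 < M) (j : ℕ) :
    patternElem M (j + 1) - patternElem M j =
      if j < M - 1 then (M : ℤ) - 1 else if j = M - 1 then (M : ℤ) else (M : ℤ) + 1 := by
  unfold patternElem
  rcases lt_trichotomy j (M - 1) with hj | rfl | hj
  · simp only [if_pos hj, if_pos (by omega : j + 1 < M), if_pos (by omega : j < M)]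
    push_cast
    ring
  · simp only [lt_irrefl, if_false, if_true, Nat.sub_add_cancel hM, if_pos (by omega : M - 1 < M),
      Nat.cast_sub hM]
    push_cast
    ring
  · simp only [if_neg (by omega : ¬j < M - 1), if_neg hj.ne', if_neg (by omega : ¬j + 1 < M),
      if_neg (by omega : ¬j < M)]
    push_cast
    ring

theorem patternElem_strictMono (hM : 0 < M) : StrictMono (patternElem M) := by
  refine strictMono_nat_of_lt_succ fun j => sub_pos.mp ?_
  rw [patternElem_succ_sub hM]
  split_ifs <;> omega

theorem image_patternElem (hM : 0 < M) :
    (Finset.range (2 * M)).image (patternElem M) = {(0 : ℤ)}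
        ∪ (Finset.Icc 1 (M - 1)).image (fun i : ℕ => (i : ℤ) * ((M : ℤ) - 1))
        ∪ {((M : ℤ) - 1) ^ 2 + M}
        ∪ (Finset.Icc 1 (M - 1)).image
            (fun i : ℕ => ((M : ℤ) - 1) ^ 2 + (M : ℤ) + (i : ℤ) * ((M : ℤ) + 1)) := by
  ext x
  simp only [Finset.mem_union, Finset.mem_image, Finset.mem_singleton, Finset.mem_Icc,
    Finset.mem_range]
  constructor
  · rintro ⟨j, hj, rfl⟩
    rcases Nat.lt_or_ge j M with hjM | hjM
    · rw [patternElem_of_lt hjM]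
      rcases Nat.eq_zero_or_pos j with rfl | hj0
      · simp
      · exact Or.inl (Or.inl (Or.inr ⟨j, ⟨hj0, by omega⟩, rfl⟩))
    · obtain ⟨i, rfl⟩ := Nat.exists_eq_add_of_le hjM
      rw [patternElem_add]
      rcases Nat.eq_zero_or_pos i with rfl | hi0
      · simp
      · exact Or.inr ⟨i, ⟨hi0, by omega⟩, rfl⟩
  · rintro (((rfl | ⟨i, hi, rfl⟩) | rfl) | ⟨i, hi, rfl⟩)
    · exact ⟨0, by omega, patternElem_zero hM⟩
    · exact ⟨i, by omega, patternElem_of_lt (by omega)⟩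
    · exact ⟨M + 0, by omega, by rw [patternElem_add]; ring⟩
    · exact ⟨M + i, by omega, patternElem_add i⟩

end

/-- Properties of the fundamental pattern
`P(M) = {0} ∪ {i(M−1)}_{i=1}^{M−1} ∪ {(M−1)²+M} ∪ {(M−1)²+M+i(M+1)}_{i=1}^{M−1}`:
(i) it has exactly `2M` elements; (ii) its minimum is `0` and its maximum is
`M(2M−1)`, so its spread equals `b(b−1)/2` with `b = 2M`; (iii) listed in
increasing order, the consecutive differences are `M−1` (repeated `M−1` times),
then `M` once, then `M+1` (repeated `M−1` times). -/
theorem fundamental_pattern_properties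
    (M : ℕ) (hM : 0 < M)
    (P : Finset ℤ)
    (hP : P = {(0 : ℤ)}
        ∪ (Finset.Icc 1 (M - 1)).image (fun i : ℕ => (i : ℤ) * ((M : ℤ) - 1))
        ∪ {((M : ℤ) - 1) ^ 2 + M}
        ∪ (Finset.Icc 1 (M - 1)).image
            (fun i : ℕ => ((M : ℤ) - 1) ^ 2 + (M : ℤ) + (i : ℤ) * ((M : ℤ) + 1)))
    (l : List ℤ) (hl : l = P.sort (· ≤ ·)) :
    P.card = 2 * M ∧
    (0 : ℤ) ∈ P ∧ ((M : ℤ) * (2 * (M : ℤ) - 1)) ∈ P ∧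
    (∀ p ∈ P, (0 : ℤ) ≤ p ∧ p ≤ (M : ℤ) * (2 * (M : ℤ) - 1)) ∧
    (M : ℤ) * (2 * (M : ℤ) - 1) - 0 = (2 * (M : ℤ)) * (2 * (M : ℤ) - 1) / 2 ∧
    l.length = 2 * M ∧
    (∀ j : ℕ, j + 1 < 2 * M →
      l[j + 1]! - l[j]! =
        if j < M - 1 then (M : ℤ) - 1 else if j = M - 1 then (M : ℤ) else (M : ℤ) + 1) := by
  have hmono := patternElem_strictMono hM
  rw [← image_patternElem hM] at hP
  subst hP
  rw [hmono.sort_image_range] at hl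
  subst hl
  have hspread : (M : ℤ) * (2 * M - 1) - 0 = 2 * M * (2 * M - 1) / 2 := by
    rw [mul_assoc, Int.mul_ediv_cancel_left _ two_ne_zero, sub_zero]
  refine ⟨by rw [Finset.card_image_of_injective _ hmono.injective, Finset.card_range],
    Finset.mem_image.mpr ⟨0, by simp [hM], patternElem_zero hM⟩,
    Finset.mem_image.mpr ⟨2 * M - 1, by simp; omega, patternElem_last hM⟩, ?_, hspread,
    by simp, fun j hj => ?_⟩
  · simp only [Finset.mem_image, Finset.mem_range, forall_exists_index, and_imp]
    rintro _ j hj rfl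
    rw [← patternElem_zero hM, ← patternElem_last hM]
    exact ⟨hmono.monotone j.zero_le, hmono.monotone (by omega)⟩
  · simp [getElem!_pos, hj, (by omega : j < 2 * M), patternElem_succ_sub hM]
end

section
/- Fix an integer K ≥ 2, a real ζ > 0, and a positive integer M. Let A_c = {(ζ/M)·y + (ζ/(2M))·((M+1) mod 2) : y ∈ ℤ} and, for i ∈ {0,…,K−1}, let A_i = {Kζ·x + (2i−K+1)ζ/2 : x ∈ ℤ}. Then for every point λ ∈ A_i: (i) no point of A_c equals an endpoint λ ± Kζ/2 of the Voronoi cell of λ in A_i; and (ii) the open interval (λ − Kζ/2, λ + Kζ/2) contains exactly K·M points of A_c. That is, each side quantizer cell contains exactly N = KM central quantizer points, where N is the redundancy index. -/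
/-!
In units of the central step `ζ / M`, the central quantizer is the arithmetic progression
`b + (ζ / M) ℤ` with `b = (ζ / (2M))·((M + 1) mod 2)`, and both endpoints `λ ± Kζ/2` of a side
cell are midpoints `b + (ζ / M)(k - 1/2)` between consecutive points of that progression, `K·M`
steps apart. A midpoint is never a point of the progression, and the open interval between two
midpoints `N` steps apart contains exactly `N` points.
-/

theorem Int.cast_sub_half_lt_cast_iff {j y : ℤ} : (j : ℝ) - 1 / 2 < y ↔ j ≤ y := by
  constructor
  · intro h
    by_contra! hyj
    have : (y : ℝ) + 1 ≤ j := by exact_mod_cast hyj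
    linarith
  · intro h
    have : (j : ℝ) ≤ y := by exact_mod_cast h
    linarith

theorem Int.cast_lt_cast_sub_half_iff {y k : ℤ} : (y : ℝ) < k - 1 / 2 ↔ y < k := by
  constructor
  · intro h
    by_contra! hky
    have : (k : ℝ) ≤ y := by exact_mod_cast hky
    linarith
  · intro h
    have : (y : ℝ) + 1 ≤ k := by exact_mod_cast h
    linarith

section ArithmeticProgression

variable {b d : ℝ}

theorem add_mul_sub_half_notMem_range (hd : 0 < d) (k : ℤ) :
    b + d * (k - 1 / 2) ∉ Set.range fun y : ℤ => b + d * y := by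
  rintro ⟨y, hy⟩
  have hyk : (y : ℝ) = k - 1 / 2 := mul_left_cancel₀ hd.ne' (add_left_cancel hy)
  have : 2 * y = 2 * k - 1 := by exact_mod_cast (by linarith : (2 * y : ℝ) = 2 * k - 1)
  omega

theorem add_mul_mem_Ioo_midpoints_iff (hd : 0 < d) (j k y : ℤ) :
    b + d * y ∈ Set.Ioo (b + d * (j - 1 / 2)) (b + d * (k - 1 / 2)) ↔ y ∈ Set.Ico j k := by
  simp only [Set.mem_Ioo, Set.mem_Ico, add_lt_add_iff_left, mul_lt_mul_iff_right₀ hd,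
    Int.cast_sub_half_lt_cast_iff, Int.cast_lt_cast_sub_half_iff]

theorem range_inter_Ioo_midpoints (hd : 0 < d) (j k : ℤ) :
    (Set.range fun y : ℤ => b + d * y) ∩ Set.Ioo (b + d * (j - 1 / 2)) (b + d * (k - 1 / 2)) =
      (fun y : ℤ => b + d * y) '' Set.Ico j k := by
  ext v
  constructor
  · rintro ⟨⟨y, rfl⟩, hv⟩
    exact ⟨y, (add_mul_mem_Ioo_midpoints_iff hd j k y).mp hv, rfl⟩
  · rintro ⟨y, hy, rfl⟩
    exact ⟨⟨y, rfl⟩, (add_mul_mem_Ioo_midpoints_iff hd j k y).mpr hy⟩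

theorem ncard_range_inter_Ioo_midpoints (hd : 0 < d) (j k : ℤ) :
    ((Set.range fun y : ℤ => b + d * y) ∩
      Set.Ioo (b + d * (j - 1 / 2)) (b + d * (k - 1 / 2))).ncard = (k - j).toNat := by
  have hinj : Function.Injective fun y : ℤ => b + d * y := fun y z h => by
    exact_mod_cast mul_left_cancel₀ hd.ne' (add_left_cancel h)
  rw [range_inter_Ioo_midpoints hd, Set.ncard_image_of_injective _ hinj, ← Finset.coe_Ico,
    Set.ncard_coe_finset, Int.card_Ico]

end ArithmeticProgression

theorem side_cell_endpoints_eq_midpoints (ζ : ℝ) {M : ℕ} (hM : 0 < M) (K i : ℕ) (x : ℤ) :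
    ∃ j : ℤ,
      K * ζ * x + (2 * i - K + 1) * ζ / 2 - K * ζ / 2 =
        ζ / (2 * M) * ((M + 1) % 2 : ℕ) + ζ / M * (j - 1 / 2) ∧
      K * ζ * x + (2 * i - K + 1) * ζ / 2 + K * ζ / 2 =
        ζ / (2 * M) * ((M + 1) % 2 : ℕ) + ζ / M * ((j + (K * M : ℕ) : ℤ) - 1 / 2) := by
  obtain ⟨q, hq⟩ : ∃ q : ℕ, 2 * q + (M + 1) % 2 = M + 1 := ⟨_, Nat.div_add_mod (M + 1) 2⟩
  have hq' : (((M + 1) % 2 : ℕ) : ℝ) = M + 1 - 2 * q := by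
    rw [eq_sub_iff_add_eq']; exact_mod_cast hq
  -- `λ - Kζ/2 = ζ (m + 1/2)` with `m = Kx + i - K`, i.e. `M m + M/2` central steps
  refine ⟨M * (K * x + i - K) + q, ?_, ?_⟩ <;>
  · rw [hq']; push_cast; field_simp; ring

theorem side_cell_contains_KM_central_points_general
    (K : ℕ) (ζ : ℝ) (hζ : 0 < ζ) (M : ℕ) (hM : 0 < M)
    (Ac : Set ℝ)
    (hAc : Ac = {v : ℝ | ∃ y : ℤ,
        v = (ζ / M) * (y : ℝ) + (ζ / (2 * M)) * (((M + 1) % 2 : ℕ) : ℝ)})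
    (i : ℕ)
    (lam : ℝ)
    (hlam : ∃ x : ℤ, lam = (K : ℝ) * ζ * (x : ℝ) + (2 * (i : ℝ) - K + 1) * ζ / 2) :
    (∀ c ∈ Ac, c ≠ lam + (K : ℝ) * ζ / 2 ∧ c ≠ lam - (K : ℝ) * ζ / 2) ∧
    (Ac ∩ Set.Ioo (lam - (K : ℝ) * ζ / 2) (lam + (K : ℝ) * ζ / 2)).Finite ∧
    (Ac ∩ Set.Ioo (lam - (K : ℝ) * ζ / 2) (lam + (K : ℝ) * ζ / 2)).ncard = K * M := by
  obtain ⟨x, rfl⟩ := hlam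
  obtain ⟨j, hleft, hright⟩ := side_cell_endpoints_eq_midpoints ζ hM K i x
  have hd : 0 < ζ / M := by positivity
  have hAc_range : Ac = Set.range fun y : ℤ => ζ / (2 * M) * ((M + 1) % 2 : ℕ) + ζ / M * y := by
    rw [hAc]; ext v
    exact exists_congr fun y => by rw [eq_comm, add_comm]
  rw [hAc_range, hleft, hright]
  refine ⟨?_, ?_, ?_⟩
  · rintro c hc
    exact ⟨fun h => add_mul_sub_half_notMem_range hd _ (h ▸ hc),
      fun h => add_mul_sub_half_notMem_range hd _ (h ▸ hc)⟩
  · rw [range_inter_Ioo_midpoints hd]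
    exact (Set.finite_Ico j _).image _
  · rw [ncard_range_inter_Ioo_midpoints hd]
    omega

/-- Each side quantizer cell contains exactly `N = K·M` central quantizer points:
for any point `λ` of side quantizer `A_i`, no central point coincides with either
endpoint `λ ± Kζ/2` of its Voronoi cell, and the open interval
`(λ − Kζ/2, λ + Kζ/2)` contains exactly `K·M` points of `A_c`. -/
theorem side_cell_contains_KM_central_points
    (K : ℕ) (hK : 2 ≤ K) (ζ : ℝ) (hζ : 0 < ζ) (M : ℕ) (hM : 0 < M)
    (Ac : Set ℝ)
    (hAc : Ac = {v : ℝ | ∃ y : ℤ,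
        v = (ζ / M) * (y : ℝ) + (ζ / (2 * M)) * (((M + 1) % 2 : ℕ) : ℝ)})
    (i : ℕ) (hi : i < K)
    (lam : ℝ)
    (hlam : ∃ x : ℤ, lam = (K : ℝ) * ζ * (x : ℝ) + (2 * (i : ℝ) - K + 1) * ζ / 2) :
    (∀ c ∈ Ac, c ≠ lam + (K : ℝ) * ζ / 2 ∧ c ≠ lam - (K : ℝ) * ζ / 2) ∧
    (Ac ∩ Set.Ioo (lam - (K : ℝ) * ζ / 2) (lam + (K : ℝ) * ζ / 2)).Finite ∧
    (Ac ∩ Set.Ioo (lam - (K : ℝ) * ζ / 2) (lam + (K : ℝ) * ζ / 2)).ncard = K * M :=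
  side_cell_contains_KM_central_points_general K ζ hζ M hM Ac hAc i lam hlam
end
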